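/- Let p be a random vector in ℝ^D whose components are i.i.d. with mean zero and finite nonzero second moment σ² > 0, and let M be a D×D real matrix. Then E[p_i (M p)_i] / E[p_i²] = M i i, i.e., the ratio form of the diagonal estimation rule is exact in expectation componentwise. -/

import Mathlib

open MeasureTheory ProbabilityTheory

namespace ProbabilityTheory.iIndepFun

variable {Ω ι : Type*} [MeasurableSpace Ω] {μ : Measure Ω} {p : ι → Ω → ℝ}

theorem integrable_mul_apply (hindep : iIndepFun p μ) (hint : ∀ j, Integrable (p j) μ)
    {i : ι} (hsq : Integrable (fun ω => p i ω ^ 2) μ) (j : ι) :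
    Integrable (fun ω => p i ω * p j ω) μ := by
  by_cases hji : j = i
  · subst hji
    simpa only [sq] using hsq
  · exact (hindep.indepFun (Ne.symm hji)).integrable_mul (hint i) (hint j)

theorem integral_mul_apply [DecidableEq ι] (hindep : iIndepFun p μ) (hint : ∀ j, Integrable (p j) μ)
    {i : ι} (hmean : ∫ ω, p i ω ∂μ = 0) (j : ι) :
    ∫ ω, p i ω * p j ω ∂μ = if j = i then ∫ ω, p i ω ^ 2 ∂μ else 0 := by
  by_cases hji : j = i
  · subst hji
    simp only [if_pos, sq]
  · rw [if_neg hji, (hindep.indepFun (Ne.symm hji)).integral_fun_mul_eq_mul_integral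
      (hint i).aestronglyMeasurable (hint j).aestronglyMeasurable, hmean, zero_mul]

/-- Only the diagonal term survives: the cross terms factor through the mean of `p i`. -/
theorem integral_mul_sum_mul [Fintype ι] (hindep : iIndepFun p μ)
    (hint : ∀ j, Integrable (p j) μ) {i : ι} (hsq : Integrable (fun ω => p i ω ^ 2) μ)
    (hmean : ∫ ω, p i ω ∂μ = 0) (c : ι → ℝ) :
    ∫ ω, p i ω * ∑ j, c j * p j ω ∂μ = c i * ∫ ω, p i ω ^ 2 ∂μ := by
  classical
  calc ∫ ω, p i ω * ∑ j, c j * p j ω ∂μ = ∫ ω, ∑ j, c j * (p i ω * p j ω) ∂μ := by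
        simp_rw [Finset.mul_sum, mul_left_comm]
    _ = ∑ j, c j * ∫ ω, p i ω * p j ω ∂μ := by
        rw [integral_finsetSum _ fun j _ =>
          (hindep.integrable_mul_apply hint hsq j).const_mul (c j)]
        simp only [integral_const_mul]
    _ = c i * ∫ ω, p i ω ^ 2 ∂μ := by
        simp only [hindep.integral_mul_apply hint hmean, mul_ite, mul_zero,
          Finset.sum_ite_eq', Finset.mem_univ, if_true]

end ProbabilityTheory.iIndepFun

theorem diag_estimation_rule_ratio_general
    {Ω : Type*} [MeasurableSpace Ω] (μ : Measure Ω)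
    {D : ℕ} (M : Matrix (Fin D) (Fin D) ℝ) (p : Fin D → Ω → ℝ) (σ2 : ℝ)
    (hσ2 : 0 < σ2)
    (hindep : iIndepFun p μ)
    (hint : ∀ i, Integrable (p i) μ)
    (hint2 : ∀ i, Integrable (fun ω => p i ω ^ 2) μ)
    (hmean : ∀ i, ∫ ω, p i ω ∂μ = 0)
    (hsecond : ∀ i, ∫ ω, p i ω ^ 2 ∂μ = σ2)
    (i : Fin D) :
    (∫ ω, p i ω * (∑ j, M i j * p j ω) ∂μ) / (∫ ω, p i ω ^ 2 ∂μ) = M i i := by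
  rw [hindep.integral_mul_sum_mul hint (hint2 i) (hmean i), hsecond i,
    mul_div_cancel_right₀ _ hσ2.ne']

/-- General diagonal estimation rule (Bekas et al.): for a probe vector with i.i.d.
mean-zero components of second moment `σ² > 0`,
`E[pᵢ (M p)ᵢ] / E[pᵢ²] = M i i`. -/
theorem diag_estimation_rule_ratio
    {Ω : Type*} [MeasurableSpace Ω] (μ : Measure Ω) [IsProbabilityMeasure μ]
    {D : ℕ} (M : Matrix (Fin D) (Fin D) ℝ) (p : Fin D → Ω → ℝ) (σ2 : ℝ)
    (hσ2 : 0 < σ2)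
    (hmeas : ∀ i, Measurable (p i))
    (hindep : iIndepFun p μ)
    (hint : ∀ i, Integrable (p i) μ)
    (hint2 : ∀ i, Integrable (fun ω => p i ω ^ 2) μ)
    (hmean : ∀ i, ∫ ω, p i ω ∂μ = 0)
    (hsecond : ∀ i, ∫ ω, p i ω ^ 2 ∂μ = σ2)
    (i : Fin D) :
    (∫ ω, p i ω * (∑ j, M i j * p j ω) ∂μ) / (∫ ω, p i ω ^ 2 ∂μ) = M i i :=
  diag_estimation_rule_ratio_general μ M p σ2 hσ2 hindep hint hint2 hmean hsecond i
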